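/- The operator p_{k,n} = E^(k)F^(k)/\binom{n}{k}_q on the q^{2k-n} weight space of V_1^{⊗n} commutes with the U_q(sl_2)-action in the sense that E ∘ p_{k,n} = p_{k+1,n} ∘ E as maps from the q^{2k-n} weight space to the q^{2k+2-n} weight space, for 0 ≤ k < n. -/

import Mathlib

noncomputable section

open Finset

/-- The base field ℂ(q). -/
abbrev Fq : Type := RatFunc ℂ

/-- The variable q. -/
def q : Fq := RatFunc.X

/-- Quantum integer [k] = ∑_{j=0}^{k-1} q^{k-2j-1}. -/
def qint (k : ℕ) : Fq := ∑ j ∈ Finset.range k, q ^ ((k : ℤ) - 2 * j - 1)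

/-- Quantum factorial [k]!. -/
def qfact (k : ℕ) : Fq := ∏ j ∈ Finset.range k, qint (j + 1)

/-- Quantum binomial coefficient. -/
def qbinom (n k : ℕ) : Fq := qfact n / (qfact k * qfact (n - k))

/-- The n-th tensor power V₁^{⊗n} of the 2-dimensional simple module, modelled
as coefficient functions on the standard basis {v_a : a ∈ {0,1}^n}. -/
abbrev V (n : ℕ) : Type := (Fin n → Fin 2) → Fq

/-- weight contribution of a single tensor factor -/
def wtc (a : Fin 2) : ℤ := 2 * (a : ℤ) - 1

/-- total weight of a basis vector -/
def wt {n : ℕ} (b : Fin n → Fin 2) : ℤ := ∑ i, wtc (b i)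

/-- Action of E on V₁^{⊗n} via iterated comultiplication Δ(E)=1⊗E+E⊗K⁻¹. -/
def Eop {n : ℕ} (x : V n) : V n := fun b =>
  ∑ i : Fin n, if b i = 1 then
    q ^ (-(∑ j ∈ Finset.univ.filter (fun j => i < j), wtc (b j))) *
      x (Function.update b i 0)
  else 0

/-- Action of F on V₁^{⊗n} via iterated comultiplication Δ(F)=K⊗F+F⊗1. -/
def Fop {n : ℕ} (x : V n) : V n := fun b =>
  ∑ i : Fin n, if b i = 0 then
    q ^ (∑ j ∈ Finset.univ.filter (fun j => j < i), wtc (b j)) *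
      x (Function.update b i 1)
  else 0

/-- Action of K on V₁^{⊗n}. -/
def Kop {n : ℕ} (x : V n) : V n := fun b => q ^ (wt b) * x b

/-- Action of K⁻¹ on V₁^{⊗n}. -/
def Kinv {n : ℕ} (x : V n) : V n := fun b => q ^ (-(wt b)) * x b

/-- Divided power E^{(k)} = E^k/[k]!. -/
def Ediv {n : ℕ} (k : ℕ) (x : V n) : V n := fun b => (qfact k)⁻¹ * (Eop^[k] x) b

/-- Divided power F^{(k)} = F^k/[k]!. -/
def Fdiv {n : ℕ} (k : ℕ) (x : V n) : V n := fun b => (qfact k)⁻¹ * (Fop^[k] x) b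

/-- Projection 1_λ onto the q^λ-eigenspace of K. -/
def proj {n : ℕ} (lam : ℤ) (x : V n) : V n := fun b => if wt b = lam then x b else 0

/-- The operator p_{k,n} = E^{(k)}F^{(k)} / [n choose k]. -/
def pkn {n : ℕ} (k : ℕ) (x : V n) : V n := fun b => (qbinom n k)⁻¹ * Ediv k (Fdiv k x) b

/-- The Jones-Wenzl projector p_n = ∑_k p_{k,n} 1_{-n+2k}. -/
def JW {n : ℕ} (x : V n) : V n :=
  ∑ k ∈ Finset.range (n + 1), pkn k (proj (-(n : ℤ) + 2 * k) x)



lemma q_ne_zero : q ≠ 0 := RatFunc.X_ne_zero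

lemma qpow_ne_one (m : ℕ) (hm : 0 < m) : (q:Fq)^(m:ℤ) ≠ 1 := by
  rw [zpow_natCast]
  intro h
  have h2 : (algebraMap (Polynomial ℂ) Fq) (Polynomial.X ^ m) = algebraMap (Polynomial ℂ) Fq 1 := by
    simpa [q, map_pow, RatFunc.algebraMap_X] using h
  have h3 := RatFunc.algebraMap_injective ℂ h2
  have := congrArg Polynomial.natDegree h3
  simp [Polynomial.natDegree_X_pow] at this
  omega

lemma qden_ne : q - q⁻¹ ≠ 0 := by
  intro h
  have h1 : q = q⁻¹ := sub_eq_zero.mp h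
  have h2 : (q:Fq)^((2:ℕ):ℤ) = 1 := by
    push_cast
    rw [zpow_two]
    nth_rewrite 2 [h1]
    exact mul_inv_cancel₀ q_ne_zero
  exact qpow_ne_one 2 (by norm_num) h2

/-- balanced quantum integer for any integer -/
def qI (m : ℤ) : Fq := (q ^ m - q ^ (-m)) / (q - q⁻¹)

lemma qI_mul (m : ℤ) : (q - q⁻¹) * qI m = q ^ m - q ^ (-m) := by
  rw [qI, mul_div_cancel₀ _ qden_ne]

lemma qI_neg (m : ℤ) : qI (-m) = - qI m := by
  rw [qI, qI, neg_neg, ← neg_div, neg_sub]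

lemma sub_mul_zpow (e : ℤ) : (q - q⁻¹) * q ^ e = q ^ (e+1) - q ^ (e-1) := by
  rw [sub_mul, zpow_add₀ q_ne_zero, zpow_sub₀ q_ne_zero, zpow_one]
  ring

lemma qint_eq_qI (k : ℕ) : qint k = qI (k : ℤ) := by
  have h : (q - q⁻¹) * qint k = (q - q⁻¹) * qI k := by
    rw [qI_mul, qint, Finset.mul_sum]
    have : ∀ j ∈ Finset.range k, (q - q⁻¹) * q ^ ((k:ℤ) - 2*j - 1)
        = (fun j : ℕ => q ^ ((k:ℤ) - 2*j)) j - (fun j : ℕ => q ^ ((k:ℤ) - 2*j)) (j+1) := by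
      intro j _
      rw [sub_mul_zpow]
      push_cast
      ring_nf
    rw [Finset.sum_congr rfl this, Finset.sum_range_sub']
    have c0 : (k:ℤ) - 2*((0:ℕ):ℤ) = (k:ℤ) := by push_cast; ring
    have ck : (k:ℤ) - 2*((k:ℕ):ℤ) = -(k:ℤ) := by push_cast; ring
    rw [c0, ck]
  exact mul_left_cancel₀ qden_ne h

lemma qI_nat_ne_zero (m : ℕ) (hm : 0 < m) : qI (m : ℤ) ≠ 0 := by
  rw [qI, div_ne_zero_iff]
  refine ⟨?_, qden_ne⟩
  intro h
  have h1 : (q:Fq) ^ (m:ℤ) = q ^ (-(m:ℤ)) := sub_eq_zero.mp h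
  have h2 : (q:Fq) ^ ((2*m:ℕ):ℤ) = 1 := by
    push_cast
    rw [two_mul, zpow_add₀ q_ne_zero]
    nth_rewrite 2 [h1]
    rw [← zpow_add₀ q_ne_zero]
    simp
  exact qpow_ne_one (2*m) (by omega) h2

lemma qint_ne_zero (m : ℕ) (hm : 0 < m) : qint m ≠ 0 := by
  rw [qint_eq_qI]; exact qI_nat_ne_zero m hm

lemma qfact_ne_zero (k : ℕ) : qfact k ≠ 0 := by
  rw [qfact]
  exact Finset.prod_ne_zero_iff.mpr fun j _ => qint_ne_zero (j+1) (by omega)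

/-- The key telescoping sum of commutator scalars. -/
lemma Csum_eq (m : ℕ) (μ : ℤ) :
    ∑ j ∈ Finset.range m, qI (μ - 2*j) = qI m * qI (μ - m + 1) := by
  have key : (q - q⁻¹) * ((q - q⁻¹) * ∑ j ∈ Finset.range m, qI (μ - 2*j))
      = (q - q⁻¹) * ((q - q⁻¹) * (qI m * qI (μ - m + 1))) := by
    rw [Finset.mul_sum, Finset.mul_sum]
    have step : ∀ j ∈ Finset.range m, (q - q⁻¹) * ((q - q⁻¹) * qI (μ - 2*j))
        = ((fun j : ℕ => q ^ (μ - 2*j + 1)) j - (fun j : ℕ => q ^ (μ - 2*j + 1)) (j+1))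
          - ((fun j : ℕ => q ^ (2*(j:ℤ) - μ - 1)) (j+1) - (fun j : ℕ => q ^ (2*(j:ℤ) - μ - 1)) j) := by
      intro j _
      rw [qI_mul, mul_sub, sub_mul_zpow, sub_mul_zpow]
      push_cast
      ring_nf
    have tele1 := Finset.sum_range_sub' (fun j : ℕ => q ^ (μ - 2*(j:ℤ) + 1)) m
    have tele2 := Finset.sum_range_sub (fun j : ℕ => q ^ (2*(j:ℤ) - μ - 1)) m
    rw [Finset.sum_congr rfl step, Finset.sum_sub_distrib, tele1, tele2]
    have h2 : (q - q⁻¹) * ((q - q⁻¹) * (qI m * qI (μ - m + 1)))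
        = ((q - q⁻¹) * qI m) * ((q - q⁻¹) * qI (μ - m + 1)) := by ring
    rw [h2, qI_mul, qI_mul]
    rw [sub_mul, mul_sub, mul_sub, ← zpow_add₀ q_ne_zero, ← zpow_add₀ q_ne_zero,
      ← zpow_add₀ q_ne_zero, ← zpow_add₀ q_ne_zero]
    rw [show (m:ℤ) + (μ - m + 1) = μ + 1 by ring,
      show (m:ℤ) + -(μ - m + 1) = 2*(m:ℤ) - μ - 1 by ring,
      show -(m:ℤ) + (μ - m + 1) = μ - 2*(m:ℤ) + 1 by ring,
      show -(m:ℤ) + -(μ - m + 1) = -μ - 1 by ring,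
      show μ - 2*((0:ℕ):ℤ) + 1 = μ + 1 by push_cast; ring,
      show 2*((0:ℕ):ℤ) - μ - 1 = -μ - 1 by push_cast; ring]
    ring
  exact mul_left_cancel₀ qden_ne (mul_left_cancel₀ qden_ne key)

/-- The final scalar identity. -/
lemma scalar_id (n k : ℕ) (hk : k < n) :
    (qbinom n k)⁻¹ * ((qfact k)⁻¹ * (qfact k)⁻¹)
      = (qbinom n (k+1))⁻¹ * ((qfact (k+1))⁻¹ * (qfact (k+1))⁻¹) * (qI (k+1) * qI ((n:ℤ) - k)) := by
  have hnk : n - k = (n - k - 1) + 1 := by omega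
  have hnk2 : n - (k+1) = n - k - 1 := by omega
  have e1 : qfact (k+1) = qfact k * qint (k+1) := Finset.prod_range_succ _ _
  have e2 : qfact (n-k) = qfact (n-k-1) * qint (n-k) := by
    rw [hnk]; exact Finset.prod_range_succ _ _
  have e3 : qI ((k:ℤ)+1) = qint (k+1) := by rw [qint_eq_qI]; push_cast; ring_nf
  have e4 : qI ((n:ℤ) - k) = qint (n-k) := by
    rw [qint_eq_qI]
    congr 1
    omega
  rw [qbinom, qbinom, hnk2, e2]
  push_cast
  rw [e3, e4, e1]
  have h1 := qfact_ne_zero n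
  have h2 := qfact_ne_zero k
  have h3 := qfact_ne_zero (n-k-1)
  have h4 := qint_ne_zero (k+1) (by omega)
  have h5 := qint_ne_zero (n-k) (by omega)
  field_simp

/-! ### Partial weight sums -/

def Bw {n : ℕ} (b : Fin n → Fin 2) (i : Fin n) : ℤ :=
  ∑ j ∈ Finset.univ.filter (fun j => j < i), wtc (b j)

def Aw {n : ℕ} (b : Fin n → Fin 2) (i : Fin n) : ℤ :=
  ∑ j ∈ Finset.univ.filter (fun j => i < j), wtc (b j)

lemma wtc_zero : wtc 0 = -1 := by decide
lemma wtc_one : wtc 1 = 1 := by decide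
lemma fin2_cases (a : Fin 2) : a = 0 ∨ a = 1 := by revert a; decide

lemma sum_wtc_update {n : ℕ} (b : Fin n → Fin 2) (i : Fin n) (v : Fin 2)
    (s : Finset (Fin n)) :
    ∑ j ∈ s, wtc (Function.update b i v j)
      = (∑ j ∈ s, wtc (b j)) + (if i ∈ s then wtc v - wtc (b i) else 0) := by
  by_cases h : i ∈ s
  · rw [if_pos h]
    have hupd : ∀ j, wtc (Function.update b i v j)
        = Function.update (fun j => wtc (b j)) i (wtc v) j := by
      intro j
      by_cases hj : j = i
      · subst hj; simp
      · rw [Function.update_of_ne hj, Function.update_of_ne hj]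
    rw [Finset.sum_congr rfl (fun j _ => hupd j), Finset.sum_update_of_mem h,
      ← Finset.sum_erase_add s (fun j => wtc (b j)) h, Finset.erase_eq]
    ring
  · rw [if_neg h, add_zero]
    refine Finset.sum_congr rfl fun j hj => ?_
    have : j ≠ i := fun hji => h (hji ▸ hj)
    rw [Function.update_of_ne this]

lemma wt_update {n : ℕ} (b : Fin n → Fin 2) (i : Fin n) (v : Fin 2) :
    wt (Function.update b i v) = wt b + (wtc v - wtc (b i)) := by
  rw [wt, wt, sum_wtc_update, if_pos (Finset.mem_univ i)]

lemma Bw_update {n : ℕ} (b : Fin n → Fin 2) (i i' : Fin n) (v : Fin 2) :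
    Bw (Function.update b i v) i' = Bw b i' + (if i < i' then wtc v - wtc (b i) else 0) := by
  rw [Bw, Bw, sum_wtc_update]
  congr 1
  simp [Finset.mem_filter]

lemma Aw_update {n : ℕ} (b : Fin n → Fin 2) (i i' : Fin n) (v : Fin 2) :
    Aw (Function.update b i' v) i = Aw b i + (if i < i' then wtc v - wtc (b i') else 0) := by
  rw [Aw, Aw, sum_wtc_update]
  congr 1
  simp [Finset.mem_filter]

lemma wt_split {n : ℕ} (b : Fin n → Fin 2) (i : Fin n) :
    wt b = Bw b i + wtc (b i) + Aw b i := by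
  have h1 : (Finset.univ : Finset (Fin n)).filter (fun j => ¬ j < i)
      = insert i (Finset.univ.filter (fun j => i < j)) := by
    ext j
    simp only [Finset.mem_filter, Finset.mem_univ, true_and, Finset.mem_insert]
    rw [Fin.lt_def, Fin.lt_def, Fin.ext_iff]
    omega
  have h2 : i ∉ Finset.univ.filter (fun j : Fin n => i < j) := by
    simp [Finset.mem_filter]
  rw [wt, ← Finset.sum_filter_add_sum_filter_not Finset.univ (fun j => j < i), h1,
    Finset.sum_insert h2, Bw, Aw]
  ring

/-! ### Weight support -/

def hasWt {n : ℕ} (μ : ℤ) (x : V n) : Prop := ∀ b, wt b ≠ μ → x b = 0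

lemma Eop_wt {n : ℕ} {μ : ℤ} {x : V n} (hx : hasWt μ x) : hasWt (μ + 2) (Eop x) := by
  intro b hb
  refine Finset.sum_eq_zero fun i _ => ?_
  by_cases h : b i = 1
  · rw [if_pos h, hx _ ?_, mul_zero]
    rw [wt_update, h, wtc_zero, wtc_one]
    omega
  · rw [if_neg h]

lemma Fop_wt {n : ℕ} {μ : ℤ} {x : V n} (hx : hasWt μ x) : hasWt (μ - 2) (Fop x) := by
  intro b hb
  refine Finset.sum_eq_zero fun i _ => ?_
  by_cases h : b i = 0
  · rw [if_pos h, hx _ ?_, mul_zero]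
    rw [wt_update, h, wtc_zero, wtc_one]
    omega
  · rw [if_neg h]

lemma Fop_iter_wt {n : ℕ} {μ : ℤ} {x : V n} (hx : hasWt μ x) (m : ℕ) :
    hasWt (μ - 2 * m) (Fop^[m] x) := by
  induction m with
  | zero => simpa using hx
  | succ m ih =>
    rw [Function.iterate_succ_apply']
    have := Fop_wt ih
    have hc : μ - 2 * ((m : ℤ) + 1) = μ - 2 * m - 2 := by ring
    push_cast
    rw [hc]
    exact this

lemma wt_ge {n : ℕ} (b : Fin n → Fin 2) : -(n : ℤ) ≤ wt b := by
  rw [wt]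
  have : ∀ i : Fin n, -1 ≤ wtc (b i) := by
    intro i
    rcases fin2_cases (b i) with h | h <;> rw [h] <;> simp [wtc_zero, wtc_one]
  calc -(n:ℤ) = ∑ _i : Fin n, (-1 : ℤ) := by simp
  _ ≤ ∑ i, wtc (b i) := Finset.sum_le_sum fun i _ => this i

lemma hasWt_zero {n : ℕ} {μ : ℤ} {x : V n} (hx : hasWt μ x) (h : μ < -(n:ℤ)) :
    x = fun _ => 0 := by
  funext b
  exact hx b (by have := wt_ge b; omega)

/-! ### Linearity -/

lemma Eop_lin {n : ℕ} (f g : V n) (c : Fq) :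
    Eop (fun b => f b + c * g b) = fun b => Eop f b + c * Eop g b := by
  funext b
  rw [Eop, Eop, Eop, Finset.mul_sum, ← Finset.sum_add_distrib]
  refine Finset.sum_congr rfl fun i _ => ?_
  by_cases h : b i = 1 <;> simp [h] <;> ring

lemma Fop_lin {n : ℕ} (f g : V n) (c : Fq) :
    Fop (fun b => f b + c * g b) = fun b => Fop f b + c * Fop g b := by
  funext b
  rw [Fop, Fop, Fop, Finset.mul_sum, ← Finset.sum_add_distrib]
  refine Finset.sum_congr rfl fun i _ => ?_
  by_cases h : b i = 0 <;> simp [h] <;> ring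

lemma Eop_smul {n : ℕ} (g : V n) (c : Fq) :
    Eop (fun b => c * g b) = fun b => c * Eop g b := by
  funext b
  rw [Eop, Eop, Finset.mul_sum]
  refine Finset.sum_congr rfl fun i _ => ?_
  by_cases h : b i = 1 <;> simp [h] <;> ring

lemma Fop_smul {n : ℕ} (g : V n) (c : Fq) :
    Fop (fun b => c * g b) = fun b => c * Fop g b := by
  funext b
  rw [Fop, Fop, Finset.mul_sum]
  refine Finset.sum_congr rfl fun i _ => ?_
  by_cases h : b i = 0 <;> simp [h] <;> ring

lemma Eop_iter_smul {n : ℕ} (k : ℕ) (g : V n) (c : Fq) :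
    Eop^[k] (fun b => c * g b) = fun b => c * Eop^[k] g b := by
  induction k with
  | zero => rfl
  | succ k ih =>
    rw [Function.iterate_succ_apply', ih, Eop_smul]
    rw [Function.iterate_succ_apply']

lemma Fop_iter_lin {n : ℕ} (k : ℕ) (f g : V n) (c : Fq) :
    Fop^[k] (fun b => f b + c * g b) = fun b => Fop^[k] f b + c * Fop^[k] g b := by
  induction k with
  | zero => rfl
  | succ k ih =>
    rw [Function.iterate_succ_apply', ih, Fop_lin]
    rw [Function.iterate_succ_apply', Function.iterate_succ_apply']

lemma Eop_zero {n : ℕ} : Eop (n := n) (fun _ => 0) = fun _ => 0 := by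
  funext b
  rw [Eop]
  exact Finset.sum_eq_zero fun i _ => by by_cases h : b i = 1 <;> simp [h]

/-! ### The commutation relation EF - FE = (K - K⁻¹)/(q - q⁻¹) -/

def Gd {n : ℕ} (x : V n) (b : Fin n → Fin 2) (i i' : Fin n) : Fq :=
  if b i = 1 ∧ Function.update b i 0 i' = 0 then
    q ^ (-(Aw b i)) * (q ^ (Bw (Function.update b i 0) i') *
      x (Function.update (Function.update b i 0) i' 1))
  else 0

def Hd {n : ℕ} (x : V n) (b : Fin n → Fin 2) (i' i : Fin n) : Fq :=
  if b i' = 0 ∧ Function.update b i' 1 i = 1 then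
    q ^ (Bw b i') * (q ^ (-(Aw (Function.update b i' 1) i)) *
      x (Function.update (Function.update b i' 1) i 0))
  else 0

lemma step1 {n : ℕ} (x : V n) (b : Fin n → Fin 2) :
    Eop (Fop x) b = ∑ i, ∑ i', Gd x b i i' := by
  rw [Eop]
  refine Finset.sum_congr rfl fun i _ => ?_
  by_cases h : b i = 1
  · rw [if_pos h, Fop, Finset.mul_sum]
    refine Finset.sum_congr rfl fun i' _ => ?_
    by_cases h' : Function.update b i 0 i' = 0
    · rw [Gd, if_pos h', if_pos ⟨h, h'⟩]
      rfl
    · rw [Gd, if_neg h', if_neg (fun hc => h' hc.2), mul_zero]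
  · rw [if_neg h]
    exact (Finset.sum_eq_zero fun i' _ => if_neg (fun hc => h hc.1)).symm

lemma step2 {n : ℕ} (x : V n) (b : Fin n → Fin 2) :
    Fop (Eop x) b = ∑ i', ∑ i, Hd x b i' i := by
  rw [Fop]
  refine Finset.sum_congr rfl fun i' _ => ?_
  by_cases h : b i' = 0
  · rw [if_pos h, Eop, Finset.mul_sum]
    refine Finset.sum_congr rfl fun i _ => ?_
    by_cases h' : Function.update b i' 1 i = 1
    · rw [Hd, if_pos h', if_pos ⟨h, h'⟩]
      rfl
    · rw [Hd, if_neg h', if_neg (fun hc => h' hc.2), mul_zero]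
  · rw [if_neg h]
    exact (Finset.sum_eq_zero fun i _ => if_neg (fun hc => h hc.1)).symm

lemma offdiag {n : ℕ} (x : V n) (b : Fin n → Fin 2) (i i' : Fin n) (hne : i ≠ i') :
    Gd x b i i' = Hd x b i' i := by
  by_cases h1 : b i = 1
  · by_cases h2 : b i' = 0
    · have hui' : Function.update b i 0 i' = 0 := by
        rw [Function.update_of_ne (Ne.symm hne)]; exact h2
      have hui : Function.update b i' 1 i = 1 := by
        rw [Function.update_of_ne hne]; exact h1
      rw [Gd, Hd, if_pos ⟨h1, hui'⟩, if_pos ⟨h2, hui⟩]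
      have harg : Function.update (Function.update b i 0) i' 1
          = Function.update (Function.update b i' 1) i 0 := Function.update_comm hne 0 1 b
      rw [harg, ← mul_assoc, ← mul_assoc, ← zpow_add₀ q_ne_zero, ← zpow_add₀ q_ne_zero]
      congr 2
      rw [Bw_update, Aw_update, h1, h2, wtc_zero, wtc_one]
      by_cases hlt : i < i' <;> simp [hlt] <;> ring
    · rw [Gd, Hd, if_neg, if_neg]
      · exact fun hc => h2 hc.1
      · intro hc
        apply h2
        have := hc.2
        rwa [Function.update_of_ne (Ne.symm hne)] at this
  · rw [Gd, Hd, if_neg, if_neg]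
    · intro hc
      apply h1
      have := hc.2
      rwa [Function.update_of_ne hne] at this
    · exact fun hc => h1 hc.1

lemma diag_sub {n : ℕ} (x : V n) (b : Fin n → Fin 2) (i : Fin n) :
    Gd x b i i - Hd x b i i
      = (if b i = 1 then q ^ (Bw b i - Aw b i) else -q ^ (Bw b i - Aw b i)) * x b := by
  have hBw : Bw (Function.update b i 0) i = Bw b i := by
    rw [Bw_update]; simp
  have hAw : Aw (Function.update b i 1) i = Aw b i := by
    rw [Aw_update]; simp
  rcases fin2_cases (b i) with h | h
  · have hG : Gd x b i i = 0 := by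
      rw [Gd, if_neg]
      intro hc
      rw [h] at hc
      exact absurd hc.1 (by decide)
    have hH : Hd x b i i = q ^ (Bw b i - Aw b i) * x b := by
      rw [Hd, if_pos ⟨h, Function.update_self i 1 b⟩, hAw]
      rw [Function.update_idem]
      rw [show Function.update b i 0 = b from h ▸ Function.update_eq_self i b]
      rw [← mul_assoc, ← zpow_add₀ q_ne_zero, ← sub_eq_add_neg]
    rw [hG, hH, if_neg (by rw [h]; decide)]
    ring
  · have hH : Hd x b i i = 0 := by
      rw [Hd, if_neg]
      intro hc
      rw [h] at hc
      exact absurd hc.1 (by decide)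
    have hG : Gd x b i i = q ^ (Bw b i - Aw b i) * x b := by
      rw [Gd, if_pos ⟨h, Function.update_self i 0 b⟩, hBw]
      rw [Function.update_idem]
      rw [show Function.update b i 1 = b from h ▸ Function.update_eq_self i b]
      rw [← mul_assoc, ← zpow_add₀ q_ne_zero,
        show -Aw b i + Bw b i = Bw b i - Aw b i from by ring]
    rw [hG, hH, if_pos h]
    ring

lemma telescope {n : ℕ} (b : Fin n → Fin 2) :
    ∑ i : Fin n, (if b i = 1 then q ^ (Bw b i - Aw b i) else -q ^ (Bw b i - Aw b i))
      = qI (wt b) := by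
  set c : ℕ → ℤ := fun m => if h : m < n then wtc (b ⟨m, h⟩) else 0 with hc
  set T : ℕ → ℤ := fun m => ∑ j ∈ Finset.range m, c j with hT
  have hBw : ∀ i : Fin n, Bw b i = T i.val := by
    intro i
    have himg : Finset.range i.val
        = (Finset.univ.filter (fun j : Fin n => j < i)).image Fin.val := by
      ext m
      simp only [Finset.mem_range, Finset.mem_image, Finset.mem_filter, Finset.mem_univ,
        true_and, Fin.lt_def]
      constructor
      · intro hm
        exact ⟨⟨m, lt_trans hm i.isLt⟩, hm, rfl⟩
      · rintro ⟨j, hj, rfl⟩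
        exact hj
    rw [hT]
    simp only
    rw [himg, Finset.sum_image (fun a _ a' _ h => Fin.val_injective h)]
    rw [Bw]
    refine Finset.sum_congr rfl fun j _ => ?_
    rw [hc]
    simp only [j.isLt, dif_pos, Fin.eta]
  have hwt : wt b = T n := by
    have himg : Finset.range n = (Finset.univ : Finset (Fin n)).image Fin.val := by
      ext m
      simp only [Finset.mem_range, Finset.mem_image, Finset.mem_univ, true_and]
      exact ⟨fun hm => ⟨⟨m, hm⟩, rfl⟩, by rintro ⟨j, rfl⟩; exact j.isLt⟩
    rw [hT]
    simp only
    rw [himg, Finset.sum_image (fun a _ a' _ h => Fin.val_injective h), wt]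
    refine Finset.sum_congr rfl fun j _ => ?_
    rw [hc]
    simp only [j.isLt, dif_pos, Fin.eta]
  have hTs : ∀ i : Fin n, T (i.val + 1) = T i.val + wtc (b i) := by
    intro i
    rw [hT]
    simp only
    rw [Finset.sum_range_succ]
    congr 1
    rw [hc]
    simp only [i.isLt, dif_pos, Fin.eta]
  have hAw : ∀ i : Fin n, Aw b i = T n - T (i.val + 1) := by
    intro i
    have h1 := wt_split b i
    rw [hBw i] at h1
    rw [hTs i, ← hwt]
    omega
  have main : (q - q⁻¹) * ∑ i : Fin n,
      (if b i = 1 then q ^ (Bw b i - Aw b i) else -q ^ (Bw b i - Aw b i))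
      = q ^ (T n) - q ^ (-(T n)) := by
    rw [Finset.mul_sum]
    have step : ∀ i : Fin n, (q - q⁻¹) *
        (if b i = 1 then q ^ (Bw b i - Aw b i) else -q ^ (Bw b i - Aw b i))
        = (fun m : ℕ => q ^ (2 * T m - T n)) (i.val + 1)
          - (fun m : ℕ => q ^ (2 * T m - T n)) i.val := by
      intro i
      simp only
      rcases fin2_cases (b i) with h | h
      · have hT1 : T (i.val + 1) = T i.val - 1 := by rw [hTs, h, wtc_zero]; ring
        rw [if_neg (by rw [h]; decide)]
        rw [show Bw b i - Aw b i = 2 * T i.val - 1 - T n by rw [hBw, hAw, hT1]; ring]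
        rw [mul_neg, sub_mul_zpow, hT1]
        rw [show 2 * T i.val - 1 - T n + 1 = 2 * T i.val - T n by ring,
          show 2 * T i.val - 1 - T n - 1 = 2 * (T i.val - 1) - T n by ring]
        ring
      · have hT1 : T (i.val + 1) = T i.val + 1 := by rw [hTs, h, wtc_one]
        rw [if_pos h]
        rw [show Bw b i - Aw b i = 2 * T i.val + 1 - T n by rw [hBw, hAw, hT1]; ring]
        rw [sub_mul_zpow, hT1]
        rw [show 2 * T i.val + 1 - T n + 1 = 2 * (T i.val + 1) - T n by ring,
          show 2 * T i.val + 1 - T n - 1 = 2 * T i.val - T n by ring]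
    rw [Finset.sum_congr rfl (fun i _ => step i)]
    rw [Fin.sum_univ_eq_sum_range (fun m : ℕ => (fun m : ℕ => q ^ (2 * T m - T n)) (m + 1)
      - (fun m : ℕ => q ^ (2 * T m - T n)) m) n]
    rw [Finset.sum_range_sub (fun m : ℕ => q ^ (2 * T m - T n)) n]
    have hT0 : T 0 = 0 := by rw [hT]; simp
    rw [hT0]
    rw [show 2 * T n - T n = T n by ring, show 2 * (0:ℤ) - T n = -(T n) by ring]
  rw [hwt]
  exact mul_left_cancel₀ qden_ne (main.trans (qI_mul (T n)).symm)

lemma EF_comm {n : ℕ} (x : V n) (b : Fin n → Fin 2) :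
    Eop (Fop x) b = Fop (Eop x) b + qI (wt b) * x b := by
  rw [step1, step2]
  have hsplit : ∀ i i' : Fin n, Gd x b i i'
      = Hd x b i' i + (if i = i' then Gd x b i i - Hd x b i i else 0) := by
    intro i i'
    by_cases h : i = i'
    · subst h; rw [if_pos rfl]; ring
    · rw [if_neg h, offdiag x b i i' h]; ring
  calc ∑ i, ∑ i', Gd x b i i'
      = ∑ i, ∑ i', (Hd x b i' i + (if i = i' then Gd x b i i - Hd x b i i else 0)) := by
        exact Finset.sum_congr rfl fun i _ => Finset.sum_congr rfl fun i' _ => hsplit i i'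
    _ = (∑ i, ∑ i', Hd x b i' i) + ∑ i : Fin n, (Gd x b i i - Hd x b i i) := by
        have inner : ∀ i : Fin n, ∑ i', (Hd x b i' i
            + if i = i' then Gd x b i i - Hd x b i i else 0)
            = (∑ i', Hd x b i' i) + (Gd x b i i - Hd x b i i) := by
          intro i
          rw [Finset.sum_add_distrib,
            Finset.sum_ite_eq Finset.univ i (fun _ => Gd x b i i - Hd x b i i),
            if_pos (Finset.mem_univ i)]
        rw [Finset.sum_congr rfl fun i _ => inner i, Finset.sum_add_distrib]
    _ = (∑ i', ∑ i, Hd x b i' i) + qI (wt b) * x b := by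
        rw [Finset.sum_comm]
        congr 1
        rw [Finset.sum_congr rfl fun i _ => diag_sub x b i, ← Finset.sum_mul, telescope]

/-! ### Iterated commutation and the main theorem -/

lemma comm_wt {n : ℕ} {μ : ℤ} {x : V n} (hx : hasWt μ x) :
    Eop (Fop x) = fun b => Fop (Eop x) b + qI μ * x b := by
  funext b
  rw [EF_comm]
  by_cases h : wt b = μ
  · rw [h]
  · rw [hx b h, mul_zero, mul_zero]

lemma EF_pow {n : ℕ} {μ : ℤ} {x : V n} (hx : hasWt μ x) (m : ℕ) :
    Eop (Fop^[m+1] x) = fun b => Fop^[m+1] (Eop x) b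
      + (∑ j ∈ Finset.range (m+1), qI (μ - 2*j)) * Fop^[m] x b := by
  induction m generalizing μ x with
  | zero =>
    rw [Function.iterate_one, comm_wt hx]
    funext b
    rw [Finset.sum_range_one]
    norm_num
  | succ m ih =>
    rw [Function.iterate_succ_apply Fop (m+1) x, ih (Fop_wt hx), comm_wt hx,
      Fop_iter_lin (m+1) (fun b => Fop (Eop x) b) x (qI μ)]
    funext b
    rw [show Fop^[m+1] (fun b => Fop (Eop x) b) = Fop^[m+1] (Fop (Eop x)) from rfl,
      ← Function.iterate_succ_apply Fop (m+1) (Eop x),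
      ← Function.iterate_succ_apply Fop m x]
    have hsum : ∑ j ∈ Finset.range (m+1+1), qI (μ - 2*j)
        = (∑ j ∈ Finset.range (m+1), qI (μ - 2 - 2*j)) + qI μ := by
      rw [Finset.sum_range_succ' (fun j : ℕ => qI (μ - 2*j)) (m+1)]
      congr 1
      · refine Finset.sum_congr rfl fun j _ => ?_
        congr 1
        push_cast
        ring
      · norm_num
    rw [hsum]
    ring

theorem pkn_intertwines_E' (n k : ℕ) (hk : k < n) (x : V n)
    (hx : ∀ b, wt b ≠ 2 * (k : ℤ) - n → x b = 0) :
    Eop (pkn k x) = pkn (k + 1) (Eop x) := by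
  have hxw : hasWt (2 * (k:ℤ) - n) x := hx
  have hL : Eop (pkn k x) = fun b =>
      ((qbinom n k)⁻¹ * ((qfact k)⁻¹ * (qfact k)⁻¹)) * Eop^[k+1] (Fop^[k] x) b := by
    have h1 : pkn k x = fun b =>
        ((qbinom n k)⁻¹ * ((qfact k)⁻¹ * (qfact k)⁻¹)) * Eop^[k] (Fop^[k] x) b := by
      funext b
      simp only [pkn, Ediv]
      rw [show Fdiv k x = (fun c => (qfact k)⁻¹ * Fop^[k] x c) from rfl,
        Eop_iter_smul k (Fop^[k] x) (qfact k)⁻¹]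
      ring
    rw [h1, Eop_smul]
    funext b
    rw [← Function.iterate_succ_apply' Eop k (Fop^[k] x)]
  have hF0 : Fop^[k+1] x = fun _ => 0 := by
    apply hasWt_zero (Fop_iter_wt hxw (k+1))
    push_cast
    omega
  have hcomm := EF_pow hxw k
  rw [hF0, Eop_zero] at hcomm
  have hFE : Fop^[k+1] (Eop x) = fun b =>
      (-(∑ j ∈ Finset.range (k+1), qI (2 * (k:ℤ) - n - 2*j))) * Fop^[k] x b := by
    funext b
    have h := congrFun hcomm b
    linear_combination -h
  have hR : pkn (k+1) (Eop x) = fun b =>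
      ((qbinom n (k+1))⁻¹ * ((qfact (k+1))⁻¹ * (qfact (k+1))⁻¹)) *
        ((-(∑ j ∈ Finset.range (k+1), qI (2 * (k:ℤ) - n - 2*j))) * Eop^[k+1] (Fop^[k] x) b) := by
    funext b
    simp only [pkn, Ediv]
    rw [show Fdiv (k+1) (Eop x) = (fun c => (qfact (k+1))⁻¹ * Fop^[k+1] (Eop x) c) from rfl,
      hFE]
    rw [show (fun b => (qfact (k+1))⁻¹ *
        ((-(∑ j ∈ Finset.range (k+1), qI (2 * (k:ℤ) - n - 2*j))) * Fop^[k] x b))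
      = (fun b => ((qfact (k+1))⁻¹ *
        (-(∑ j ∈ Finset.range (k+1), qI (2 * (k:ℤ) - n - 2*j)))) * Fop^[k] x b)
      from funext fun b => by ring]
    rw [Eop_iter_smul (k+1) (Fop^[k] x) _]
    ring
  rw [hL, hR]
  funext b
  have hC : (∑ j ∈ Finset.range (k+1), qI (2 * (k:ℤ) - n - 2*j))
      = qI (k+1) * qI ((k:ℤ) - n) := by
    rw [Csum_eq (k+1) (2 * (k:ℤ) - n),
      show ((k+1:ℕ):ℤ) = (k:ℤ)+1 from by push_cast; ring,
      show 2*(k:ℤ) - n - ((k:ℤ)+1) + 1 = (k:ℤ) - n from by ring]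
  rw [hC, show (k:ℤ) - n = -((n:ℤ) - k) by ring, qI_neg]
  have hs := scalar_id n k hk
  linear_combination (Eop^[k+1] (Fop^[k] x) b) * hs

/-- Theorem: E ∘ p_{k,n} = p_{k+1,n} ∘ E on the q^{2k-n} weight space, for 0 ≤ k < n. -/
theorem pkn_intertwines_E (n k : ℕ) (hk : k < n) (x : V n)
    (hx : ∀ b, wt b ≠ 2 * (k : ℤ) - n → x b = 0) :
    Eop (pkn k x) = pkn (k + 1) (Eop x) :=
  pkn_intertwines_E' n k hk x hx
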